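/- Let φ : 𝔻 → 𝔻 be a pseudo-rotation (a smooth area-preserving diffeomorphism with a unique periodic point x₀, necessarily an interior fixed point) that is smoothly conjugate to a rigid rotation on the boundary. Assume: (i) the generalized Hutchings inequality — if 𝒱(ψ,0) < 0 for an area-preserving disc diffeomorphism ψ smoothly conjugate to a rotation on ∂𝔻, then inf{A_{(ψ,0)}(x) : x ∈ P(ψ)} ≤ 𝒱(ψ,0); and (ii) the fixed point action identity A_{(φ,0)}(x₀) = 0. Then 𝒱(φ, 0) = 0, i.e. the Calabi invariant of φ equals its rotation number. -/

import Mathlib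

open MeasureTheory Filter Metric Set Real
open scoped Topology

noncomputable section

/-- The closed disc of radius `s` centered at the origin in `ℝ²`. -/
def Disc (s : ℝ) : Set (ℝ × ℝ) := Metric.closedBall 0 s

/-- β = (x dy - y dx)/2, the Cartesian expression of the 1-form (r²/2)dθ. -/
def betaForm (p : ℝ × ℝ) : (ℝ × ℝ) →L[ℝ] ℝ :=
  (p.1 / 2) • ContinuousLinearMap.snd ℝ ℝ ℝ - (p.2 / 2) • ContinuousLinearMap.fst ℝ ℝ ℝ

/-- The 1-form χ*β − β at the point p, with derivatives taken within the disc of radius s. -/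
def pullbackMinusBeta (s : ℝ) (χ : ℝ × ℝ → ℝ × ℝ) (p : ℝ × ℝ) : (ℝ × ℝ) →L[ℝ] ℝ :=
  (betaForm (χ p)).comp (fderivWithin ℝ χ (Disc s) p) - betaForm p

/-- f is an action function of χ on the disc of radius s : df = χ*β − β. -/
def IsActionFn (s : ℝ) (χ : ℝ × ℝ → ℝ × ℝ) (f : ℝ × ℝ → ℝ) : Prop :=
  ContDiffOn ℝ (⊤ : ℕ∞) f (Disc s) ∧
  ∀ p ∈ Disc s, fderivWithin ℝ f (Disc s) p = pullbackMinusBeta s χ p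

/-- χ is a smooth area-preserving diffeomorphism of the disc of radius s
(preserving the boundary circle). -/
def AreaPres (s : ℝ) (χ : ℝ × ℝ → ℝ × ℝ) : Prop :=
  ContDiffOn ℝ (⊤ : ℕ∞) χ (Disc s) ∧ Set.BijOn χ (Disc s) (Disc s) ∧
  Set.MapsTo χ (Metric.sphere 0 s) (Metric.sphere 0 s) ∧
  ∀ p ∈ Disc s, (fderivWithin ℝ χ (Disc s) p).det = 1

/-- The Calabi invariant associated to an action function f : its ω-mean value over the disc. -/
def Calabi (s : ℝ) (f : ℝ × ℝ → ℝ) : ℝ :=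
  (∫ p in Disc s, f p) / (MeasureTheory.volume (Disc s)).toReal

/-- The action function f of χ is normalized so that its asymptotic mean value
on the boundary circle of radius s is 0. -/
def BoundaryMeanZero (s : ℝ) (χ : ℝ × ℝ → ℝ × ℝ) (f : ℝ × ℝ → ℝ) : Prop :=
  ∀ x ∈ Metric.sphere (0 : ℝ × ℝ) s,
    Filter.Tendsto (fun n : ℕ => (∑ i ∈ Finset.range n, f (χ^[i] x)) / n)
      Filter.atTop (nhds 0)

/-- Rigid rotation of the plane by angle 2πθ₀. -/
def rot (θ₀ : ℝ) (p : ℝ × ℝ) : ℝ × ℝ :=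
  (Real.cos (2 * π * θ₀) * p.1 - Real.sin (2 * π * θ₀) * p.2,
   Real.sin (2 * π * θ₀) * p.1 + Real.cos (2 * π * θ₀) * p.2)

/-- χ is smoothly conjugate to a rigid rotation on the boundary circle:
there is a smooth diffeomorphism h of the boundary circle with χ∘h = h∘(rotation). -/
def ConjRotOnBoundary (s : ℝ) (χ : ℝ × ℝ → ℝ × ℝ) : Prop :=
  ∃ h hinv : ℝ × ℝ → ℝ × ℝ, ContDiff ℝ (⊤ : ℕ∞) h ∧ ContDiff ℝ (⊤ : ℕ∞) hinv ∧
    Set.BijOn h (Metric.sphere (0 : ℝ × ℝ) s) (Metric.sphere (0 : ℝ × ℝ) s) ∧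
    (∀ p ∈ Metric.sphere (0 : ℝ × ℝ) s, hinv (h p) = p) ∧
    ∃ θ₀ : ℝ, ∀ p ∈ Metric.sphere (0 : ℝ × ℝ) s, χ (h p) = h (rot θ₀ p)

/-! ### Auxiliary material: the reflection `(x, y) ↦ (x, -y)` -/

/-- Reflection of the plane across the first axis, as a continuous linear equivalence. -/
def Req : (ℝ × ℝ) ≃L[ℝ] ℝ × ℝ :=
  (ContinuousLinearEquiv.refl ℝ ℝ).prodCongr (ContinuousLinearEquiv.neg ℝ)

/-- The same reflection as a continuous linear map. -/
def Rcl : (ℝ × ℝ) →L[ℝ] ℝ × ℝ := Req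

lemma Req_apply (p : ℝ × ℝ) : Req p = (p.1, -p.2) := rfl

lemma Rcl_apply (p : ℝ × ℝ) : Rcl p = (p.1, -p.2) := rfl

lemma Req_Req (p : ℝ × ℝ) : Req (Req p) = p := by
  simp [Req_apply]

lemma norm_Req (p : ℝ × ℝ) : ‖Req p‖ = ‖p‖ := by
  simp [Req_apply, Prod.norm_def]

lemma Req_mem_disc {p : ℝ × ℝ} : Req p ∈ Disc 1 ↔ p ∈ Disc 1 := by
  simp [Disc, mem_closedBall_zero_iff, norm_Req]

lemma Req_mem_sphere {p : ℝ × ℝ} : Req p ∈ Metric.sphere (0 : ℝ × ℝ) 1 ↔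
    p ∈ Metric.sphere (0 : ℝ × ℝ) 1 := by
  simp [mem_sphere_zero_iff_norm, norm_Req]

lemma Req_preimage_disc : (⇑Req) ⁻¹' Disc 1 = Disc 1 := by
  ext q; exact Req_mem_disc

lemma Req_bijOn {s : Set (ℝ × ℝ)} (h : ∀ p, Req p ∈ s ↔ p ∈ s) :
    Set.BijOn (⇑Req) s s := by
  refine ⟨fun p hp => (h p).2 hp, fun p _ q _ hpq => ?_, fun y hy => ⟨Req y, (h y).2 hy, Req_Req y⟩⟩
  have := congrArg Req hpq
  rwa [Req_Req, Req_Req] at this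

lemma Req_bijOn_disc : Set.BijOn (⇑Req) (Disc 1) (Disc 1) :=
  Req_bijOn fun _ => Req_mem_disc

lemma Req_bijOn_sphere :
    Set.BijOn (⇑Req) (Metric.sphere (0 : ℝ × ℝ) 1) (Metric.sphere (0 : ℝ × ℝ) 1) :=
  Req_bijOn fun _ => Req_mem_sphere

lemma uD : UniqueDiffOn ℝ (Disc 1) := by
  apply uniqueDiffOn_convex (convex_closedBall _ _)
  show (interior (Metric.closedBall (0 : ℝ × ℝ) 1)).Nonempty
  rw [interior_closedBall (0 : ℝ × ℝ) one_ne_zero]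
  exact Metric.nonempty_ball.2 one_pos

lemma psi_iterate (φ : ℝ × ℝ → ℝ × ℝ) (x : ℝ × ℝ) (n : ℕ) :
    (fun p => Req (φ (Req p)))^[n] x = Req (φ^[n] (Req x)) := by
  induction n with
  | zero => simp [Req_Req]
  | succ n ih =>
    rw [Function.iterate_succ_apply', ih, Function.iterate_succ_apply']
    simp [Req_Req]

lemma detRR :
    LinearMap.det ((Rcl : (ℝ × ℝ) →ₗ[ℝ] ℝ × ℝ) ∘ₗ (Rcl : (ℝ × ℝ) →ₗ[ℝ] ℝ × ℝ)) = 1 := by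
  have h : ((Rcl : (ℝ × ℝ) →ₗ[ℝ] ℝ × ℝ) ∘ₗ (Rcl : (ℝ × ℝ) →ₗ[ℝ] ℝ × ℝ)) = LinearMap.id :=
    LinearMap.ext fun p => Req_Req p
  rw [h, LinearMap.det_id]

lemma measurePres_Req : MeasurePreserving (⇑Req) (volume : Measure (ℝ × ℝ)) volume := by
  have h : MeasurePreserving (Prod.map (id : ℝ → ℝ) (Neg.neg : ℝ → ℝ))
      ((volume : Measure ℝ).prod volume) ((volume : Measure ℝ).prod volume) :=
    (MeasurePreserving.id volume).prod (Measure.measurePreserving_neg volume)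
  have he : ⇑Req = Prod.map (id : ℝ → ℝ) (Neg.neg : ℝ → ℝ) := rfl
  rw [MeasureTheory.Measure.volume_eq_prod, he]
  exact h

lemma betaForm_Req (q : ℝ × ℝ) : (betaForm (Req q)).comp Rcl = -betaForm q := by
  refine ContinuousLinearMap.ext fun v => ?_
  simp [betaForm, Req_apply, Rcl_apply, smul_eq_mul]
  ring

/-- Calabi identity for pseudo-rotations: for a pseudo-rotation φ
(unique periodic point x₀, an interior fixed point) that is smoothly conjugate to
a rotation on ∂𝔻, assuming (i) the generalized Hutchings inequality and (ii) the
fixed point action identity A_{(φ,0)}(x₀) = 0, the normalized Calabi invariant of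
φ vanishes, i.e. the Calabi invariant equals the rotation number. -/
theorem calabi_identity_pseudo_rotation
    (hHut : ∀ ψ : ℝ × ℝ → ℝ × ℝ, ∀ fψ : ℝ × ℝ → ℝ,
      AreaPres 1 ψ → IsActionFn 1 ψ fψ → BoundaryMeanZero 1 ψ fψ →
      ConjRotOnBoundary 1 ψ → Calabi 1 fψ < 0 →
      ∀ ε > (0 : ℝ), ∃ x ∈ Disc 1, ∃ d : ℕ, 0 < d ∧ ψ^[d] x = x ∧
        (∑ i ∈ Finset.range d, fψ (ψ^[i] x)) / d ≤ Calabi 1 fψ + ε)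
    (φ : ℝ × ℝ → ℝ × ℝ) (f : ℝ × ℝ → ℝ)
    (hφ : AreaPres 1 φ) (hf : IsActionFn 1 φ f)
    (hb : BoundaryMeanZero 1 φ f)
    (hconj : ConjRotOnBoundary 1 φ)
    (x₀ : ℝ × ℝ) (hx₀ : x₀ ∈ Metric.ball (0 : ℝ × ℝ) 1)
    (hfix : φ x₀ = x₀)
    (huniq : ∀ x ∈ Disc 1, ∀ d : ℕ, 0 < d → φ^[d] x = x → x = x₀)
    (haction : f x₀ = 0) :
    Calabi 1 f = 0 := by
  have hx₀D : x₀ ∈ Disc 1 := Metric.ball_subset_closedBall hx₀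
  have hiter : ∀ n : ℕ, φ^[n] x₀ = x₀ := fun n => Function.iterate_fixed hfix n
  rcases lt_trichotomy (Calabi 1 f) 0 with hc | hc | hc
  · -- negative case : apply Hutchings to φ itself
    exfalso
    obtain ⟨x, hxD, d, hd, hper, hle⟩ :=
      hHut φ f hφ hf hb hconj hc (-(Calabi 1 f) / 2) (by linarith)
    have hx : x = x₀ := huniq x hxD d hd hper
    have hsum : (∑ i ∈ Finset.range d, f (φ^[i] x)) = 0 := by
      subst hx
      simp [hiter, haction]
    rw [hsum, zero_div] at hle
    linarith
  · exact hc
  · -- positive case : apply Hutchings to the reflected map ψ = R ∘ φ ∘ R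
    exfalso
    obtain ⟨hφs, hφbij, hφsph, hφdet⟩ := hφ
    obtain ⟨hfs, hfd⟩ := hf
    set ψ : ℝ × ℝ → ℝ × ℝ := fun p => Req (φ (Req p)) with hψdef
    set g : ℝ × ℝ → ℝ := fun p => -f (Req p) with hgdef
    have hRmapsD : Set.MapsTo (⇑Req) (Disc 1) (Disc 1) := Req_bijOn_disc.mapsTo
    -- derivative of ψ
    have hderiv_psi : ∀ p ∈ Disc 1, fderivWithin ℝ ψ (Disc 1) p =
        (Rcl.comp (fderivWithin ℝ φ (Disc 1) (Req p))).comp Rcl := by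
      intro p hp
      have h1 : fderivWithin ℝ (⇑Req ∘ (φ ∘ ⇑Req)) (Disc 1) p =
          Rcl.comp (fderivWithin ℝ (φ ∘ ⇑Req) (Disc 1) p) :=
        Req.comp_fderivWithin (uD p hp)
      have h2 : fderivWithin ℝ (φ ∘ ⇑Req) (Disc 1) p =
          (fderivWithin ℝ φ (Disc 1) (Req p)).comp Rcl := by
        have := Req.comp_right_fderivWithin (f := φ) (s := Disc 1) (x := p)
          (by rw [Req_preimage_disc]; exact uD p hp)
        rwa [Req_preimage_disc] at this
      have hpsi : ψ = ⇑Req ∘ (φ ∘ ⇑Req) := rfl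
      rw [hpsi, h1, h2, ContinuousLinearMap.comp_assoc]
    -- derivative of g
    have hderiv_g : ∀ p ∈ Disc 1, fderivWithin ℝ g (Disc 1) p =
        -((fderivWithin ℝ f (Disc 1) (Req p)).comp Rcl) := by
      intro p hp
      have h0 : fderivWithin ℝ g (Disc 1) p =
          -(fderivWithin ℝ (f ∘ ⇑Req) (Disc 1) p) := by
        have := fderivWithin_neg (𝕜 := ℝ) (f := f ∘ ⇑Req) (s := Disc 1) (x := p) (uD p hp)
        exact this
      have h2 : fderivWithin ℝ (f ∘ ⇑Req) (Disc 1) p =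
          (fderivWithin ℝ f (Disc 1) (Req p)).comp Rcl := by
        have := Req.comp_right_fderivWithin (f := f) (s := Disc 1) (x := p)
          (by rw [Req_preimage_disc]; exact uD p hp)
        rwa [Req_preimage_disc] at this
      rw [h0, h2]
    -- ψ is area preserving
    have hψarea : AreaPres 1 ψ := by
      refine ⟨?_, ?_, ?_, ?_⟩
      · exact (Req : (ℝ × ℝ) →L[ℝ] ℝ × ℝ).contDiff.comp_contDiffOn
          (hφs.comp ((Req : (ℝ × ℝ) →L[ℝ] ℝ × ℝ).contDiff.contDiffOn) hRmapsD)
      · exact Req_bijOn_disc.comp (hφbij.comp Req_bijOn_disc)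
      · exact Req_bijOn_sphere.mapsTo.comp (hφsph.comp Req_bijOn_sphere.mapsTo)
      · intro p hp
        rw [hderiv_psi p hp]
        have hA : (fderivWithin ℝ φ (Disc 1) (Req p)).det = 1 :=
          hφdet (Req p) (Req_mem_disc.2 hp)
        have h2 : LinearMap.det ((Rcl : (ℝ × ℝ) →ₗ[ℝ] ℝ × ℝ)) *
            LinearMap.det ((Rcl : (ℝ × ℝ) →ₗ[ℝ] ℝ × ℝ)) = 1 := by
          rw [← LinearMap.det_comp]; exact detRR
        show LinearMap.det _ = 1
        rw [ContinuousLinearMap.toLinearMap_comp, ContinuousLinearMap.toLinearMap_comp,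
          LinearMap.det_comp, LinearMap.det_comp]
        have hA' : LinearMap.det ((fderivWithin ℝ φ (Disc 1) (Req p) :
            (ℝ × ℝ) →ₗ[ℝ] ℝ × ℝ)) = 1 := hA
        rw [hA']
        linarith [h2]
    -- g is an action function for ψ
    have hψact : IsActionFn 1 ψ g := by
      constructor
      · exact ((hfs.comp ((Req : (ℝ × ℝ) →L[ℝ] ℝ × ℝ).contDiff.contDiffOn) hRmapsD)).neg
      · intro p hp
        rw [hderiv_g p hp, hfd (Req p) (Req_mem_disc.2 hp)]
        unfold pullbackMinusBeta
        rw [hderiv_psi p hp]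
        refine ContinuousLinearMap.ext fun v => ?_
        have hψp : ψ p = Req (φ (Req p)) := rfl
        rw [hψp]
        simp only [ContinuousLinearMap.neg_apply, ContinuousLinearMap.sub_apply,
          ContinuousLinearMap.comp_apply, betaForm, ContinuousLinearMap.smul_apply,
          ContinuousLinearMap.coe_fst', ContinuousLinearMap.coe_snd', smul_eq_mul,
          Req_apply, Rcl_apply]
        ring
    -- boundary mean zero for ψ, g
    have hψbd : BoundaryMeanZero 1 ψ g := by
      intro x hx
      have hx' : Req x ∈ Metric.sphere (0 : ℝ × ℝ) 1 := Req_mem_sphere.2 hx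
      have h0 := (hb (Req x) hx').neg
      rw [neg_zero] at h0
      refine h0.congr fun n => ?_
      rw [← neg_div]
      congr 1
      rw [← Finset.sum_neg_distrib]
      refine Finset.sum_congr rfl fun i _ => ?_
      rw [hψdef, psi_iterate φ x i]
      simp [hgdef, Req_Req]
    -- conjugate to a rotation on the boundary
    have hψconj : ConjRotOnBoundary 1 ψ := by
      obtain ⟨h, hinv, hsm, hinvsm, hbijS, hlinv, θ₀, hcom⟩ := hconj
      refine ⟨fun p => Req (h (Req p)), fun p => Req (hinv (Req p)), ?_, ?_, ?_, ?_, -θ₀, ?_⟩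
      · exact (Req : (ℝ × ℝ) →L[ℝ] ℝ × ℝ).contDiff.comp
          (hsm.comp (Req : (ℝ × ℝ) →L[ℝ] ℝ × ℝ).contDiff)
      · exact (Req : (ℝ × ℝ) →L[ℝ] ℝ × ℝ).contDiff.comp
          (hinvsm.comp (Req : (ℝ × ℝ) →L[ℝ] ℝ × ℝ).contDiff)
      · exact Req_bijOn_sphere.comp (hbijS.comp Req_bijOn_sphere)
      · intro p hp
        have hp' : Req p ∈ Metric.sphere (0 : ℝ × ℝ) 1 := Req_mem_sphere.2 hp
        show Req (hinv (Req (Req (h (Req p))))) = p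
        rw [Req_Req, hlinv (Req p) hp', Req_Req]
      · intro p hp
        have hp' : Req p ∈ Metric.sphere (0 : ℝ × ℝ) 1 := Req_mem_sphere.2 hp
        have hrot : rot θ₀ (Req p) = Req (rot (-θ₀) p) := by
          have harg : 2 * π * -θ₀ = -(2 * π * θ₀) := by ring
          rw [Prod.ext_iff]
          constructor <;>
            simp [rot, Req_apply, harg, Real.cos_neg, Real.sin_neg] <;> ring
        show Req (φ (Req (Req (h (Req p))))) = Req (h (Req (rot (-θ₀) p)))
        rw [Req_Req, hcom (Req p) hp', hrot]
    -- the Calabi invariant of g is the negative of that of f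
    have hcal : Calabi 1 g = -Calabi 1 f := by
      unfold Calabi
      rw [← neg_div]
      congr 1
      have hemb : MeasurableEmbedding (⇑Req) :=
        Req.toHomeomorph.measurableEmbedding
      have := measurePres_Req.setIntegral_preimage_emb hemb f (Disc 1)
      rw [Req_preimage_disc] at this
      rw [show (fun p => g p) = fun p => -f (Req p) from rfl]
      rw [MeasureTheory.integral_neg, this]
    have hcneg : Calabi 1 g < 0 := by rw [hcal]; linarith
    obtain ⟨x, hxD, d, hd, hper, hle⟩ :=
      hHut ψ g hψarea hψact hψbd hψconj hcneg (Calabi 1 f / 2) (by linarith)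
    -- the periodic point must be the reflection of x₀
    have hperφ : φ^[d] (Req x) = Req x := by
      have h1 : Req (φ^[d] (Req x)) = x := by rw [← psi_iterate φ x d]; exact hper
      have := congrArg Req h1
      rwa [Req_Req] at this
    have hRx : Req x ∈ Disc 1 := Req_mem_disc.2 hxD
    have hx : Req x = x₀ := huniq (Req x) hRx d hd hperφ
    have hxval : x = Req x₀ := by rw [← hx, Req_Req]
    have hsum : (∑ i ∈ Finset.range d, g (ψ^[i] x)) = 0 := by
      refine Finset.sum_eq_zero fun i _ => ?_
      rw [psi_iterate φ x i, hx, hiter i]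
      show -f (Req (Req x₀)) = 0
      rw [Req_Req, haction, neg_zero]
    rw [hsum, zero_div, hcal] at hle
    linarith
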